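/- Let g be the 11-uniform morphism 0↦00100110111, 1↦00100110001, 2↦00100011011. For every ternary square-free word w, the binary word g(w) avoids the formula AA.ABAB.BB (no non-empty binary words A, B with AA, ABAB, and BB all factors of g(w)) and contains no square of period at least 4. -/

import Mathlib

def g2w (g : Fin 3 → List Bool) (w : List (Fin 3)) : List Bool :=
  (w.map g).flatten

def SqFree {α : Type*} (w : List α) : Prop :=
  ∀ X : List α, X ≠ [] → ¬ (X ++ X) <:+: w

def g11 : Fin 3 → List Bool := ![[false,false,true,false,false,true,true,false,true,true,true], [false,false,true,false,false,true,true,false,false,false,true], [false,false,true,false,false,false,true,true,false,true,true]]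

/- ## Basic lemmas about the morphism -/

lemma g2w_nil : g2w g11 [] = [] := rfl

lemma g2w_cons (c : Fin 3) (w : List (Fin 3)) : g2w g11 (c :: w) = g11 c ++ g2w g11 w := rfl

lemma len_g11 : ∀ c : Fin 3, (g11 c).length = 11 := by decide

lemma g2w_length : ∀ w : List (Fin 3), (g2w g11 w).length = 11 * w.length
  | [] => rfl
  | c :: w => by
      rw [g2w_cons, List.length_append, len_g11, g2w_length w, List.length_cons]; ring

lemma g2w_getElem? : ∀ (w : List (Fin 3)) (a t : ℕ), t < 11 →
    (g2w g11 w)[11*a + t]? = w[a]?.bind fun c => (g11 c)[t]?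
  | [], a, t, ht => by simp [g2w_nil]
  | c :: w, 0, t, ht => by
      rw [g2w_cons]
      simp only [Nat.mul_zero, Nat.zero_add]
      rw [List.getElem?_append_left (by rw [len_g11]; exact ht)]
      simp
  | c :: w, a+1, t, ht => by
      rw [g2w_cons, List.getElem?_append_right (by rw [len_g11]; omega)]
      have h : 11*(a+1) + t - (g11 c).length = 11*a + t := by rw [len_g11]; omega
      rw [h, g2w_getElem? w a t ht]
      simp

lemma g2w_take : ∀ (w : List (Fin 3)) (q : ℕ), (g2w g11 w).take (11*q) = g2w g11 (w.take q)
  | [], q => by simp [g2w_nil]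
  | c :: w, 0 => by simp [g2w_nil]
  | c :: w, q+1 => by
      rw [g2w_cons, List.take_append]
      have h1 : (g11 c).take (11*(q+1)) = g11 c :=
        List.take_of_length_le (by rw [len_g11]; omega)
      have h2 : 11*(q+1) - (g11 c).length = 11*q := by rw [len_g11]; omega
      rw [h1, h2, g2w_take w q, List.take_succ_cons, g2w_cons]

lemma g2w_drop : ∀ (w : List (Fin 3)) (q : ℕ), (g2w g11 w).drop (11*q) = g2w g11 (w.drop q)
  | [], q => by simp [g2w_nil]
  | c :: w, 0 => by simp
  | c :: w, q+1 => by
      rw [g2w_cons, List.drop_append]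
      have h1 : (g11 c).drop (11*(q+1)) = [] :=
        List.drop_eq_nil_of_le (by rw [len_g11]; omega)
      have h2 : 11*(q+1) - (g11 c).length = 11*q := by rw [len_g11]; omega
      rw [h1, h2, g2w_drop w q, List.drop_succ_cons, List.nil_append]

/- ## Generic list lemmas -/

lemma infix_drop_take {α : Type*} (l : List α) (i n : ℕ) : (l.drop i).take n <:+: l :=
  ((l.drop i).take_prefix n).isInfix.trans (l.drop_suffix i).isInfix

lemma exists_pos_of_infix {α : Type*} {v l : List α} (h : v <:+: l) :
    ∃ i, i + v.length ≤ l.length ∧ v = (l.drop i).take v.length := by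
  obtain ⟨s, t, hst⟩ := h
  refine ⟨s.length, ?_, ?_⟩
  · rw [← hst]; simp only [List.length_append]; omega
  · rw [← hst, List.append_assoc, List.drop_left, List.take_left]

lemma take_drop_ext {α : Type*} (l : List α) (i j p : ℕ)
    (h : ∀ t, t < p → l[i+t]? = l[j+t]?) :
    (l.drop i).take p = (l.drop j).take p := by
  apply List.ext_getElem?
  intro n
  by_cases hn : n < p
  · rw [List.getElem?_take, if_pos hn, List.getElem?_take, if_pos hn,
      List.getElem?_drop, List.getElem?_drop]
    exact h n hn
  · rw [List.getElem?_take, if_neg hn, List.getElem?_take, if_neg hn]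

lemma square_mk {α : Type*} {l : List α} {i p : ℕ} (hp : 0 < p) (hb : i + 2*p ≤ l.length)
    (h : (l.drop i).take p = (l.drop (i+p)).take p) :
    ∃ X : List α, X ≠ [] ∧ (X ++ X) <:+: l := by
  refine ⟨(l.drop i).take p, ?_, ?_⟩
  · have hlen : ((l.drop i).take p).length = p := by
      rw [List.length_take, List.length_drop]; omega
    intro hnil
    rw [hnil] at hlen
    simp at hlen; omega
  · have key : (l.drop i).take (2*p) = (l.drop i).take p ++ (l.drop (i+p)).take p := by
      rw [show 2*p = p + p from by ring, List.take_add, List.drop_drop]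
    rw [← h] at key
    rw [← key]
    exact infix_drop_take l i (2*p)

lemma square_pos {α : Type*} {X l : List α} (h : (X ++ X) <:+: l) :
    ∃ i, i + 2*X.length ≤ l.length ∧
      (l.drop i).take X.length = (l.drop (i+X.length)).take X.length := by
  obtain ⟨i, hlen, hv⟩ := exists_pos_of_infix h
  have hl : (X ++ X).length = 2 * X.length := by simp; ring
  rw [hl] at hlen hv
  refine ⟨i, hlen, ?_⟩
  have h1 := congrArg (List.take X.length) hv
  rw [List.take_left, List.take_take] at h1
  have e1 : min X.length (2 * X.length) = X.length := by omega
  rw [e1] at h1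
  have h2 := congrArg (fun y : List α => (y.drop X.length).take X.length) hv
  rw [List.drop_left] at h2
  have hXX : X.take X.length = X := List.take_of_length_le le_rfl
  rw [hXX, List.drop_take, List.drop_drop, List.take_take] at h2
  have e2 : min X.length (2 * X.length - X.length) = X.length := by omega
  rw [e2] at h2
  exact h1.symm.trans h2

lemma sqfree_infix {α : Type*} {x w : List α} (h : x <:+: w) (hw : SqFree w) : SqFree x :=
  fun X hX hXX => hw X hX (hXX.trans h)

/- ## Decidable square-freeness check -/

def chkSf (x : List (Fin 3)) : Prop :=
  ∀ p < x.length, 1 ≤ p → ∀ i < x.length, i + 2*p ≤ x.length →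
    (x.drop i).take p ≠ (x.drop (i+p)).take p

instance : DecidablePred chkSf := fun x => by unfold chkSf; infer_instance

lemma chkSf_of_sqfree {x : List (Fin 3)} (h : SqFree x) : chkSf x := by
  intro p hp hp1 i hi hb heq
  obtain ⟨X, hX, hXX⟩ := square_mk (by omega) hb heq
  exact h X hX hXX

/- ## Factor transfer -/

lemma factor_transfer {w : List (Fin 3)} {v : List Bool} (k : ℕ)
    (h : v <:+: g2w g11 w) (hl : v.length ≤ 11*k) :
    ∃ x, x <:+: w ∧ x.length ≤ k+1 ∧ v <:+: g2w g11 x := by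
  obtain ⟨i, hlen, hv⟩ := exists_pos_of_infix h
  refine ⟨(w.drop (i/11)).take (k+1), infix_drop_take w (i/11) (k+1), ?_, ?_⟩
  · rw [List.length_take]; omega
  · have key : v = ((g2w g11 ((w.drop (i/11)).take (k+1))).drop (i % 11)).take v.length := by
      rw [← g2w_take, ← g2w_drop, List.drop_take, List.take_take]
      have h1 : min v.length (11*(k+1) - i % 11) = v.length := by omega
      rw [h1, List.drop_drop]
      have h2 : 11 * (i/11) + i % 11 = i := by omega
      rw [h2]
      exact hv
    rw [key]
    exact infix_drop_take _ _ _

/- ## Enumeration of ternary words -/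

def ternAll : ℕ → List (List (Fin 3))
  | 0 => [[]]
  | n+1 => (ternAll n).flatMap fun x => [0::x, 1::x, 2::x]

lemma mem_ternAll (n : ℕ) : ∀ x : List (Fin 3), x.length = n → x ∈ ternAll n := by
  induction n with
  | zero =>
      intro x h
      rw [List.length_eq_zero_iff] at h
      simp [h, ternAll]
  | succ n ih =>
      intro x h
      cases x with
      | nil => simp at h
      | cons c x =>
          simp only [ternAll, List.mem_flatMap]
          refine ⟨x, ih x (by simpa using h), ?_⟩
          fin_cases c <;> simp

def ternUpTo (k : ℕ) : List (List (Fin 3)) := (List.range (k+1)).flatMap ternAll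

lemma mem_ternUpTo {k : ℕ} (x : List (Fin 3)) (h : x.length ≤ k) : x ∈ ternUpTo k := by
  simp only [ternUpTo, List.mem_flatMap, List.mem_range]
  exact ⟨x.length, by omega, mem_ternAll _ x rfl⟩

/- ## The finite checks -/

def chkSq (x : List (Fin 3)) : Prop :=
  ∀ p < 21, 4 ≤ p → ∀ i < (g2w g11 x).length, i + 2*p ≤ (g2w g11 x).length →
    ((g2w g11 x).drop i).take p ≠ ((g2w g11 x).drop (i+p)).take p

instance : DecidablePred chkSq := fun x => by unfold chkSq; infer_instance

set_option maxRecDepth 100000 in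
set_option maxHeartbeats 2000000 in
lemma smallCheck : ∀ x ∈ ternUpTo 5, chkSf x → chkSq x := by decide

def bwords12 : List (List Bool) :=
  [[false],[true],[false,false],[false,true],[true,false],[true,true]]

lemma mem_bwords12 (v : List Bool) (h1 : 1 ≤ v.length) (h2 : v.length ≤ 2) :
    v ∈ bwords12 := by
  match v with
  | [a] => cases a <;> simp [bwords12]
  | [a, b] => cases a <;> cases b <;> simp [bwords12]

def notFac (v : List Bool) : Prop := ∀ x ∈ ternUpTo 2, chkSf x → ¬ v <:+: g2w g11 x

instance : DecidablePred notFac := fun v => by unfold notFac; infer_instance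

lemma patCheck : ∀ A ∈ bwords12, ∀ B ∈ bwords12, A.length + B.length ≤ 3 →
    notFac (A++A) ∨ notFac (A++B++A++B) ∨ notFac (B++B) := by decide

lemma g11_inj : ∀ x y : Fin 3, (∀ t < 11, (g11 x)[t]? = (g11 y)[t]?) → x = y := by decide

lemma syncLem : ∀ c x y : Fin 3, x ≠ y → ∀ s < 11, 0 < s →
    ¬ (∀ t < 11, (g11 x ++ g11 y)[s+t]? = (g11 c)[t]?) := by decide

def BL (x y z : Fin 3) (r : ℕ) : Prop :=
  (∀ t < 11, r ≤ t → (g11 x)[t]? = (g11 y)[t]?) →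
  (∀ t < 11, t < r → (g11 y)[t]? = (g11 z)[t]?) → x = y ∨ y = z

instance (x y z : Fin 3) (r : ℕ) : Decidable (BL x y z r) := by unfold BL; infer_instance

lemma boundaryLem : ∀ x y z : Fin 3, ∀ r < 11, 0 < r → BL x y z r := by decide

/- ## Block access lemmas -/

lemma g2w_get1 {w : List (Fin 3)} {a : ℕ} (ha : a < w.length) (t : ℕ) (ht : t < 11) :
    (g2w g11 w)[11*a + t]? = (g11 (w[a]'ha))[t]? := by
  rw [g2w_getElem? w a t ht, List.getElem?_eq_getElem ha]
  simp

lemma g2w_get2 {w : List (Fin 3)} {q : ℕ} (hq : q + 1 < w.length) (t : ℕ) (ht : t < 22) :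
    (g2w g11 w)[11*q + t]? =
      (g11 (w[q]'(by omega)) ++ g11 (w[q+1]'hq))[t]? := by
  by_cases h1 : t < 11
  · rw [g2w_get1 (by omega : q < w.length) t h1,
      List.getElem?_append_left (by rw [len_g11]; exact h1)]
  · rw [show 11*q + t = 11*(q+1) + (t-11) from by omega,
      g2w_get1 hq (t-11) (by omega),
      List.getElem?_append_right (by rw [len_g11]; omega), len_g11]

lemma adj_ne {w : List (Fin 3)} (hw : SqFree w) {q : ℕ} (hq : q + 1 < w.length) :
    w[q]'(by omega) ≠ w[q+1]'hq := by
  intro he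
  have h : ∀ t, t < 1 → w[q+t]? = w[(q+1)+t]? := by
    intro t ht
    have ht0 : t = 0 := by omega
    subst ht0
    rw [Nat.add_zero, Nat.add_zero, List.getElem?_eq_getElem (by omega : q < w.length),
      List.getElem?_eq_getElem hq, he]
  have heq := take_drop_ext w q (q+1) 1 h
  obtain ⟨X, hX, hXX⟩ := square_mk (i := q) (p := 1) (by omega) (by omega) heq
  exact hw X hX hXX

/- ## No squares of period ≥ 4 -/

set_option maxHeartbeats 4000000 in
lemma noSquare (w : List (Fin 3)) (hw : SqFree w) :
    ∀ u : List Bool, 4 ≤ u.length → ¬ (u ++ u) <:+: g2w g11 w := by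
  intro u hu h
  obtain ⟨i, hib, heq⟩ := square_pos h
  rw [g2w_length] at hib
  set p := u.length with hp
  set N := w.length with hN
  have E : ∀ j, i ≤ j → j < i + p → (g2w g11 w)[j]? = (g2w g11 w)[j+p]? := by
    intro j h1 h2
    have h3 := congrArg (fun l : List Bool => l[j-i]?) heq
    rw [List.getElem?_take, if_pos (by omega), List.getElem?_take, if_pos (by omega),
      List.getElem?_drop, List.getElem?_drop,
      show i + (j-i) = j from by omega, show i + p + (j-i) = j + p from by omega] at h3
    exact h3
  rcases Nat.lt_or_ge p 21 with hsmall | hbig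
  · -- small squares: finite check
    obtain ⟨x, hxw, hxlen, hxinf⟩ := factor_transfer 4 h
      (by rw [List.length_append, ← hp]; omega)
    obtain ⟨j, hjb, hjeq⟩ := square_pos hxinf
    exact smallCheck x (mem_ternUpTo x (by omega))
      (chkSf_of_sqfree (sqfree_infix hxw hw)) p hsmall hu j (by omega) (by omega) hjeq
  · -- big squares: synchronization
    set a := (i + 10) / 11 with ha
    have haN : a < N := by omega
    have hblock : ∀ t, t < 11 → (g2w g11 w)[11*a + t]? = (g11 (w[a]'haN))[t]? :=
      fun t ht => g2w_get1 haN t ht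
    have hcopy : ∀ t, t < 11 → (g2w g11 w)[11*a + p + t]? = (g11 (w[a]'haN))[t]? := by
      intro t ht
      rw [show 11*a + p + t = (11*a + t) + p from by omega,
        ← E (11*a+t) (by omega) (by omega)]
      exact hblock t ht
    set q := (11*a + p) / 11 with hq
    set s := (11*a + p) % 11 with hs
    have hs0 : s = 0 := by
      by_contra hsne
      have hqN : q + 1 < N := by omega
      apply syncLem (w[a]'haN) (w[q]'(by omega)) (w[q+1]'hqN) (adj_ne hw hqN)
        s (by omega) (by omega)
      intro t ht
      rw [← g2w_get2 hqN (s+t) (by omega),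
        show 11*q + (s+t) = 11*a + p + t from by omega]
      exact hcopy t ht
    obtain ⟨m, hpm⟩ : ∃ m, p = 11*m := ⟨p/11, by omega⟩
    have hm2 : 2 ≤ m := by omega
    set r := i % 11 with hr
    set b0 := i / 11 with hb0
    have hfull : ∀ b, i ≤ 11*b → 11*b + 11 ≤ i + p → w[b]? = w[b+m]? := by
      intro b hb1 hb2
      have hbN : b < N := by omega
      have hbmN : b + m < N := by omega
      rw [List.getElem?_eq_getElem hbN, List.getElem?_eq_getElem hbmN]
      have hinj := g11_inj (w[b]'hbN) (w[b+m]'hbmN) ?_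
      · exact congrArg some hinj
      · intro t ht
        rw [← g2w_get1 hbN t ht, ← g2w_get1 hbmN t ht,
          show 11*(b+m) + t = (11*b + t) + p from by omega]
        exact E (11*b+t) (by omega) (by omega)
    by_cases hr0 : r = 0
    · have hsq : ∀ t, t < m → w[b0 + t]? = w[(b0 + m) + t]? := by
        intro t ht
        rw [show (b0 + m) + t = (b0 + t) + m from by omega]
        exact hfull (b0+t) (by omega) (by omega)
      obtain ⟨X, hX, hXX⟩ := square_mk (i := b0) (p := m) (by omega) (by omega)
        (take_drop_ext w b0 (b0+m) m hsq)
      exact hw X hX hXX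
    · have hb2N : b0 + 2*m < N := by omega
      have hsuf : ∀ t < 11, r ≤ t →
          (g11 (w[b0]'(by omega)))[t]? = (g11 (w[b0+m]'(by omega)))[t]? := by
        intro t ht hrt
        rw [← g2w_get1 (by omega : b0 < N) t ht, ← g2w_get1 (by omega : b0 + m < N) t ht,
          show 11*(b0+m) + t = (11*b0 + t) + p from by omega]
        exact E (11*b0 + t) (by omega) (by omega)
      have hpre : ∀ t < 11, t < r →
          (g11 (w[b0+m]'(by omega)))[t]? = (g11 (w[b0+2*m]'(by omega)))[t]? := by
        intro t ht htr
        rw [← g2w_get1 (by omega : b0 + m < N) t ht,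
          ← g2w_get1 (by omega : b0 + 2*m < N) t ht,
          show 11*(b0+2*m) + t = (11*(b0+m) + t) + p from by omega]
        exact E (11*(b0+m)+t) (by omega) (by omega)
      rcases boundaryLem _ _ _ r (by omega) (by omega) hsuf hpre with hxy | hyz
      · have hsq : ∀ t, t < m → w[b0 + t]? = w[(b0 + m) + t]? := by
          intro t ht
          rcases Nat.eq_zero_or_pos t with rfl | htpos
          · rw [Nat.add_zero, Nat.add_zero, List.getElem?_eq_getElem (by omega : b0 < N),
              List.getElem?_eq_getElem (by omega : b0 + m < N)]
            exact congrArg some hxy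
          · rw [show (b0 + m) + t = (b0 + t) + m from by omega]
            exact hfull (b0+t) (by omega) (by omega)
        obtain ⟨X, hX, hXX⟩ := square_mk (i := b0) (p := m) (by omega) (by omega)
          (take_drop_ext w b0 (b0+m) m hsq)
        exact hw X hX hXX
      · have hsq : ∀ t, t < m → w[(b0+1) + t]? = w[((b0+1) + m) + t]? := by
          intro t ht
          rcases Nat.lt_or_ge t (m-1) with hlt | hge
          · rw [show ((b0+1) + m) + t = ((b0+1) + t) + m from by omega]
            exact hfull (b0+1+t) (by omega) (by omega)
          · have htm : t = m - 1 := by omega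
            subst htm
            rw [show (b0+1) + (m-1) = b0 + m from by omega,
              show ((b0+1) + m) + (m-1) = b0 + 2*m from by omega,
              List.getElem?_eq_getElem (by omega : b0 + m < N),
              List.getElem?_eq_getElem (by omega : b0 + 2*m < N)]
            exact congrArg some hyz
        obtain ⟨X, hX, hXX⟩ := square_mk (i := b0+1) (p := m) (by omega) (by omega)
          (take_drop_ext w (b0+1) ((b0+1)+m) m hsq)
        exact hw X hX hXX

/- ## No occurrence of the pattern AA.ABAB.BB -/

lemma noPat (w : List (Fin 3)) (hw : SqFree w) :
    ¬ ∃ A B : List Bool, A ≠ [] ∧ B ≠ [] ∧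
      (A ++ A) <:+: g2w g11 w ∧
      (A ++ B ++ A ++ B) <:+: g2w g11 w ∧
      (B ++ B) <:+: g2w g11 w := by
  rintro ⟨A, B, hA, hB, hAA, hAB, hBB⟩
  have hA1 : 1 ≤ A.length := List.length_pos_iff.mpr hA
  have hB1 : 1 ≤ B.length := List.length_pos_iff.mpr hB
  have hab : A.length + B.length ≤ 3 := by
    by_contra hc
    refine noSquare w hw (A ++ B) (by rw [List.length_append]; omega) ?_
    have hassoc : (A++B) ++ (A++B) = A ++ B ++ A ++ B := by
      simp [List.append_assoc]
    rw [hassoc]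
    exact hAB
  have transf : ∀ v : List Bool, v.length ≤ 11 → v <:+: g2w g11 w → ¬ notFac v := by
    intro v hv hvf hnf
    obtain ⟨x, hxw, hxl, hxi⟩ := factor_transfer 1 hvf hv
    exact hnf x (mem_ternUpTo x (by omega)) (chkSf_of_sqfree (sqfree_infix hxw hw)) hxi
  rcases patCheck A (mem_bwords12 A hA1 (by omega)) B (mem_bwords12 B hB1 (by omega)) hab
    with hnf | hnf | hnf
  · exact transf (A++A) (by rw [List.length_append]; omega) hAA hnf
  · exact transf (A++B++A++B) (by simp only [List.length_append]; omega) hAB hnf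
  · exact transf (B++B) (by rw [List.length_append]; omega) hBB hnf

theorem stmt16 (w : List (Fin 3)) (hw : SqFree w) :
    (¬ ∃ A B : List Bool, A ≠ [] ∧ B ≠ [] ∧
      (A ++ A) <:+: g2w g11 w ∧
      (A ++ B ++ A ++ B) <:+: g2w g11 w ∧
      (B ++ B) <:+: g2w g11 w) ∧
    (∀ u : List Bool, 4 ≤ u.length → ¬ (u ++ u) <:+: g2w g11 w) :=
  ⟨noPat w hw, noSquare w hw⟩
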